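/- Let d ≥ 2. Let E0, E1 be d×d complex orthogonal projection matrices with E0 + E1 = I, and let F0, F1 be d×d complex orthogonal projection matrices with F0 + F1 = I; let κ, μ be nonzero real numbers and set G := κ·(E0 − E1) and K := μ·(F0 − F1). Let ρ be a d×d density matrix and let C be a Hermitian matrix on ℂ^d⊗ℂ^d with Tr₂C = I. Then Σ_{x1,x2∈{0,1}} (−1)^{x1}·κ·(−1)^{x2}·μ·Tr(F_{x2}·Λ_C(E_{x1}·ρ·E_{x1})) = Tr((C^{T1} ∘ (ρ⊗I))·(G⊗K)). -/
import Mathlib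


open Matrix Kronecker ComplexOrder BigOperators

noncomputable section

/-- Partial trace over the first tensor factor. -/
def ptrace1 {d : ℕ} (C : Matrix (Fin d × Fin d) (Fin d × Fin d) ℂ) :
    Matrix (Fin d) (Fin d) ℂ :=
  Matrix.of fun j j' => ∑ i : Fin d, C (i, j) (i, j')

/-- Partial trace over the second tensor factor. -/
def ptrace2 {d : ℕ} (C : Matrix (Fin d × Fin d) (Fin d × Fin d) ℂ) :
    Matrix (Fin d) (Fin d) ℂ :=
  Matrix.of fun i i' => ∑ j : Fin d, C (i, j) (i', j)

/-- Partial transpose on the first tensor factor. -/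
def ptranspose1 {d : ℕ} (C : Matrix (Fin d × Fin d) (Fin d × Fin d) ℂ) :
    Matrix (Fin d × Fin d) (Fin d × Fin d) ℂ :=
  Matrix.of fun p q => C (q.1, p.2) (p.1, q.2)

/-- The channel Λ_C(ρ) := Tr₁[C^{T1}(ρ⊗I)] associated with a Choi matrix C. -/
def chan {d : ℕ} (C : Matrix (Fin d × Fin d) (Fin d × Fin d) ℂ)
    (ρ : Matrix (Fin d) (Fin d) ℂ) : Matrix (Fin d) (Fin d) ℂ :=
  ptrace1 (ptranspose1 C * (ρ ⊗ₖ (1 : Matrix (Fin d) (Fin d) ℂ)))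

/-- The symmetrized (Jordan) product A ∘ B := (AB + BA)/2. -/
def jordan {n : Type*} [Fintype n] (A B : Matrix n n ℂ) : Matrix n n ℂ :=
  ((1 : ℂ) / 2) • (A * B + B * A)

end

lemma tr_ptrace1 {d : ℕ} (M : Matrix (Fin d × Fin d) (Fin d × Fin d) ℂ)
    (F : Matrix (Fin d) (Fin d) ℂ) :
    (F * ptrace1 M).trace = (M * ((1 : Matrix (Fin d) (Fin d) ℂ) ⊗ₖ F)).trace := by
  simp only [Matrix.trace, Matrix.diag, Matrix.mul_apply, ptrace1, Matrix.of_apply,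
    Matrix.kroneckerMap_apply, Fintype.sum_prod_type, Matrix.one_apply, ite_mul, one_mul,
    zero_mul, mul_ite, mul_zero, Finset.mem_univ, if_true, Finset.mul_sum]
  have hR : ∀ x x1 : Fin d,
      (∑ x2 : Fin d, ∑ x3 : Fin d, if x2 = x then M (x, x1) (x2, x3) * F x3 x1 else 0)
        = ∑ x3 : Fin d, M (x, x1) (x, x3) * F x3 x1 := by
    intro x x1
    rw [Finset.sum_comm]
    simp
  have hL : ∀ x : Fin d,
      (∑ x1 : Fin d, ∑ i : Fin d, F x x1 * M (i, x1) (i, x))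
        = ∑ i : Fin d, ∑ x1 : Fin d, F x x1 * M (i, x1) (i, x) := fun x => Finset.sum_comm
  simp only [hR, hL]
  rw [Finset.sum_comm]
  refine Finset.sum_congr rfl fun i _ => ?_
  rw [Finset.sum_comm]
  exact Finset.sum_congr rfl fun x _ => Finset.sum_congr rfl fun y _ => mul_comm _ _

lemma sub_kronecker' {l m n p : Type*} (A B : Matrix l m ℂ) (C : Matrix n p ℂ) :
    (A - B) ⊗ₖ C = A ⊗ₖ C - B ⊗ₖ C := by
  ext ⟨i, j⟩ ⟨k, l⟩
  simp [Matrix.kroneckerMap_apply, sub_mul]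

lemma kronecker_sub' {l m n p : Type*} (A : Matrix l m ℂ) (B C : Matrix n p ℂ) :
    A ⊗ₖ (B - C) = A ⊗ₖ B - A ⊗ₖ C := by
  ext ⟨i, j⟩ ⟨k, l⟩
  simp [Matrix.kroneckerMap_apply, mul_sub]

/-- under two-outcome projective state reduction, the observed correlation
of the observables G = κ(E0 − E1) and K = μ(F0 − F1) for a memoryless sequential strategy
equals the corresponding moment of the pseudo-density matrix C^{T1} ∘ (ρ⊗I). -/
theorem stmt19 {d : ℕ} (hd : 2 ≤ d)
    (E F : Fin 2 → Matrix (Fin d) (Fin d) ℂ)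
    (hEherm : ∀ i, (E i).IsHermitian) (hEidem : ∀ i, E i * E i = E i)
    (hEsum : E 0 + E 1 = 1)
    (hFherm : ∀ i, (F i).IsHermitian) (hFidem : ∀ i, F i * F i = F i)
    (hFsum : F 0 + F 1 = 1)
    (κ μ : ℝ) (hκ : κ ≠ 0) (hμ : μ ≠ 0)
    (ρ : Matrix (Fin d) (Fin d) ℂ) (hρ : ρ.PosSemidef) (hρtr : ρ.trace = 1)
    (C : Matrix (Fin d × Fin d) (Fin d × Fin d) ℂ) (hC : C.IsHermitian)
    (hCTP : ptrace2 C = 1) :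
    ∑ x1 : Fin 2, ∑ x2 : Fin 2,
        ((-1 : ℂ) ^ (x1 : ℕ) * (κ : ℂ) * (-1 : ℂ) ^ (x2 : ℕ) * (μ : ℂ)) *
          (F x2 * chan C (E x1 * ρ * E x1)).trace
      = (jordan (ptranspose1 C) (ρ ⊗ₖ (1 : Matrix (Fin d) (Fin d) ℂ)) *
          (((κ : ℂ) • (E 0 - E 1)) ⊗ₖ ((μ : ℂ) • (F 0 - F 1)))).trace := by
  have hE1 : E 1 = 1 - E 0 := eq_sub_of_add_eq' hEsum
  have hchan : ∀ (σ G' : Matrix (Fin d) (Fin d) ℂ),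
      (G' * chan C σ).trace = (ptranspose1 C * (σ ⊗ₖ G')).trace := by
    intro σ G'
    rw [chan, tr_ptrace1, Matrix.mul_assoc, ← Matrix.mul_kronecker_mul, Matrix.mul_one,
      Matrix.one_mul]
  -- rewrite the RHS
  have hRHS : (jordan (ptranspose1 C) (ρ ⊗ₖ (1 : Matrix (Fin d) (Fin d) ℂ)) *
          (((κ : ℂ) • (E 0 - E 1)) ⊗ₖ ((μ : ℂ) • (F 0 - F 1)))).trace
      = ((1 : ℂ) / 2) * ((κ : ℂ) * (μ : ℂ)) *
          ((ptranspose1 C * ((ρ * (E 0 - E 1)) ⊗ₖ (F 0 - F 1))).trace +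
           (ptranspose1 C * (((E 0 - E 1) * ρ) ⊗ₖ (F 0 - F 1))).trace) := by
    rw [jordan, Matrix.smul_kronecker, Matrix.kronecker_smul]
    have e1 : (ptranspose1 C * (ρ ⊗ₖ (1 : Matrix (Fin d) (Fin d) ℂ)) *
          ((E 0 - E 1) ⊗ₖ (F 0 - F 1))).trace
        = (ptranspose1 C * ((ρ * (E 0 - E 1)) ⊗ₖ (F 0 - F 1))).trace := by
      rw [Matrix.mul_assoc, ← Matrix.mul_kronecker_mul, Matrix.one_mul]
    have e2 : ((ρ ⊗ₖ (1 : Matrix (Fin d) (Fin d) ℂ)) * ptranspose1 C *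
          ((E 0 - E 1) ⊗ₖ (F 0 - F 1))).trace
        = (ptranspose1 C * (((E 0 - E 1) * ρ) ⊗ₖ (F 0 - F 1))).trace := by
      rw [Matrix.trace_mul_cycle, Matrix.trace_mul_cycle, Matrix.mul_assoc,
        ← Matrix.mul_kronecker_mul, Matrix.mul_one]
    simp only [Matrix.smul_mul, Matrix.mul_smul, Matrix.add_mul, Matrix.trace_smul,
      Matrix.trace_add, smul_eq_mul, e1, e2]
    ring
  rw [hRHS]
  simp only [Fin.sum_univ_two, Fin.val_zero, Fin.val_one, pow_zero, pow_one, hchan]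
  have key : ρ * (E 0 - E 1) + (E 0 - E 1) * ρ
      = (E 0 * ρ * E 0 - E 1 * ρ * E 1) + (E 0 * ρ * E 0 - E 1 * ρ * E 1) := by
    rw [hE1]; noncomm_ring
  have hsum : (ptranspose1 C * ((ρ * (E 0 - E 1)) ⊗ₖ (F 0 - F 1))).trace +
        (ptranspose1 C * (((E 0 - E 1) * ρ) ⊗ₖ (F 0 - F 1))).trace
      = 2 * ((ptranspose1 C * ((E 0 * ρ * E 0) ⊗ₖ F 0)).trace
          - (ptranspose1 C * ((E 0 * ρ * E 0) ⊗ₖ F 1)).trace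
          - (ptranspose1 C * ((E 1 * ρ * E 1) ⊗ₖ F 0)).trace
          + (ptranspose1 C * ((E 1 * ρ * E 1) ⊗ₖ F 1)).trace) := by
    rw [← Matrix.trace_add, ← Matrix.mul_add, ← Matrix.add_kronecker, key]
    simp only [Matrix.add_kronecker, sub_kronecker', kronecker_sub', Matrix.mul_add,
      Matrix.mul_sub, Matrix.trace_add, Matrix.trace_sub]
    ring
  linear_combination (-(1 : ℂ) / 2 * ((κ : ℂ) * (μ : ℂ))) * hsum
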